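/- arXiv:1811.12012 — 4 statements merged into one kernel-verified Lean document; each statement's English description precedes it below -/
import Mathlib

section
/- Let G be a graph with a fixed vertex ordering, let e = v₁v₂ be an edge of G, and let η be an exponent function with η(v₂) = 0 and such that the coefficient of x^η in P_{G−e} is nonzero. Define η' by η'(v₁) = η(v₁) + 1 and η'(v) = η(v) otherwise. Then the coefficient of x^{η'} in P_G is nonzero (up to sign, since P_G = ±(x_{v₁} − x_{v₂})·P_{G−e}). -/
open MvPolynomial Finset

/- The graph polynomial `P_G = ∏_{uv ∈ E(G), u < v} (x_v - x_u)`. -/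
open scoped Classical in
noncomputable def graphPoly {V : Type*} [Fintype V] [LinearOrder V]
    (G : SimpleGraph V) : MvPolynomial V ℝ :=
  ∏ p ∈ Finset.univ.filter (fun p : V × V => G.Adj p.1 p.2 ∧ p.1 < p.2),
    (X p.2 - X p.1)

/- The signed graph polynomial `P_{G,σ} = ∏_{uv ∈ E(G), u < v} (x_v - σ(uv)·x_u)`. -/
open scoped Classical in
noncomputable def signedGraphPoly {V : Type*} [Fintype V] [LinearOrder V]
    (G : SimpleGraph V) (σ : Sym2 V → ℤ) : MvPolynomial V ℤ :=
  ∏ p ∈ Finset.univ.filter (fun p : V × V => G.Adj p.1 p.2 ∧ p.1 < p.2),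
    (X p.2 - C (σ s(p.1, p.2)) * X p.1)

/- `H` is a minor of `G`: branch sets. -/
def SimpleGraph.IsMinor {W V : Type*} (H : SimpleGraph W) (G : SimpleGraph V) : Prop :=
  ∃ f : W → Set V,
    (∀ w, (G.induce (f w)).Connected) ∧
    (∀ w₁ w₂, w₁ ≠ w₂ → Disjoint (f w₁) (f w₂)) ∧
    (∀ w₁ w₂, H.Adj w₁ w₂ → ∃ v₁ ∈ f w₁, ∃ v₂ ∈ f w₂, G.Adj v₁ v₂)

/- A graph is planar iff it has no `K₅` and no `K₃,₃` minor (Wagner's theorem). -/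
def SimpleGraph.IsPlanar {V : Type*} (G : SimpleGraph V) : Prop :=
  ¬ SimpleGraph.IsMinor (completeGraph (Fin 5)) G ∧
  ¬ SimpleGraph.IsMinor (completeBipartiteGraph (Fin 3) (Fin 3)) G


/-!
Deleting the edge `v₁v₂` divides `P_G` by `±(x_{v₁} - x_{v₂})`. Since `η(v₂) = 0`, the term
`x_{v₂} · P_{G-e}` has no monomial `x^{η'}`, so the coefficient of `x^{η'}` in `P_G` is `±` the
coefficient of `x^η` in `P_{G-e}`.
-/

theorem graphPoly_eq_mul_deleteEdges {V : Type*} [Fintype V] [LinearOrder V]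
    {G : SimpleGraph V} {a b : V} (hadj : G.Adj a b) (hab : a < b) :
    graphPoly G = (X b - X a) * graphPoly (G.deleteEdges {s(a, b)}) := by
  classical
  have hedges : (univ.filter fun p : V × V => G.Adj p.1 p.2 ∧ p.1 < p.2).erase (a, b) =
      univ.filter fun p : V × V => (G.deleteEdges {s(a, b)}).Adj p.1 p.2 ∧ p.1 < p.2 := by
    ext ⟨x, y⟩
    simp only [mem_erase, mem_filter, mem_univ, true_and, SimpleGraph.deleteEdges_adj,
      Set.mem_singleton_iff, ne_eq, Prod.mk.injEq, Sym2.eq_iff]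
    constructor
    · rintro ⟨hne, hxy, hlt⟩
      refine ⟨⟨hxy, ?_⟩, hlt⟩
      rintro (h | ⟨rfl, rfl⟩)
      · exact hne h
      · exact lt_asymm hab hlt
    · rintro ⟨⟨hxy, hne⟩, hlt⟩
      exact ⟨fun h => hne (Or.inl h), hxy, hlt⟩
  unfold graphPoly
  rw [← mul_prod_erase _ _ (show (a, b) ∈ _ by simpa using ⟨hadj, hab⟩), hedges]
  congr 1
  exact prod_congr (by ext; simp) fun _ _ => rfl

theorem graphPoly_eq_mul_deleteEdges_or_neg {V : Type*} [Fintype V] [LinearOrder V]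
    {G : SimpleGraph V} {v₁ v₂ : V} (hadj : G.Adj v₁ v₂) :
    graphPoly G = (X v₁ - X v₂) * graphPoly (G.deleteEdges {s(v₁, v₂)}) ∨
      graphPoly G = -((X v₁ - X v₂) * graphPoly (G.deleteEdges {s(v₁, v₂)})) := by
  rcases lt_or_gt_of_ne hadj.ne with hlt | hlt
  · right
    rw [graphPoly_eq_mul_deleteEdges hadj hlt, ← neg_mul, neg_sub]
  · left
    rw [graphPoly_eq_mul_deleteEdges hadj.symm hlt, Sym2.eq_swap]

theorem MvPolynomial.coeff_add_single_X_sub_X_mul {R σ : Type*} [CommRing R]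
    {v w : σ} (hvw : v ≠ w) {η : σ →₀ ℕ} (hw : η w = 0) (p : MvPolynomial σ R) :
    coeff (η + Finsupp.single v 1) ((X v - X w) * p) = coeff η p := by
  classical
  have hv : v ∈ (η + Finsupp.single v 1).support := by simp
  have hw' : w ∉ (η + Finsupp.single v 1).support := by simp [hw, hvw]
  rw [sub_mul, coeff_sub, coeff_X_mul', coeff_X_mul', if_pos hv, if_neg hw',
    add_tsub_cancel_right, sub_zero]

theorem stmt_4 {V : Type*} [Fintype V] [LinearOrder V] (G : SimpleGraph V)
    (v₁ v₂ : V) (he : G.Adj v₁ v₂) (η : V →₀ ℕ) (hη2 : η v₂ = 0)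
    (h : MvPolynomial.coeff η (graphPoly (G.deleteEdges {s(v₁, v₂)})) ≠ 0) :
    MvPolynomial.coeff (η + Finsupp.single v₁ 1) (graphPoly G) ≠ 0 := by
  rcases graphPoly_eq_mul_deleteEdges_or_neg he with hG | hG
  · rwa [hG, coeff_add_single_X_sub_X_mul he.ne hη2]
  · rwa [hG, coeff_neg, coeff_add_single_X_sub_X_mul he.ne hη2, neg_ne_zero]
end

section
/- For any graph G, the choice number of G is at most the Alon–Tarsi number of G: if P_G has a non-vanishing monomial x^η with η(v) < k for all vertices v, then for every assignment of lists L(v) of k real numbers to the vertices there is a proper colouring φ with φ(v) ∈ L(v) for all v. -/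
open MvPolynomial Finset

/-
`P_G` is homogeneous, so its monomial `x^η` has top degree and the Combinatorial Nullstellensatz
applies to it with the lists `L v`, of size `k > η v`. It yields a choice `φ v ∈ L v` with
`P_G(φ) ≠ 0`, which is exactly a proper colouring.
-/

theorem MvPolynomial.IsHomogeneous.totalDegree_eq_degree {σ R : Type*} [CommSemiring R]
    {φ : MvPolynomial σ R} {n : ℕ} (hφ : φ.IsHomogeneous n) {t : σ →₀ ℕ} (ht : coeff t φ ≠ 0) :
    φ.totalDegree = t.degree := by
  rw [hφ.totalDegree (ne_of_apply_ne (coeff t) ht), ← hφ ht, Finsupp.degree_eq_weight_one]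
  rfl

section GraphPoly

variable {V : Type*} [Fintype V] [LinearOrder V] (G : SimpleGraph V)

theorem graphPoly_isHomogeneous :
    ∃ n, (graphPoly G).IsHomogeneous n := by
  classical
  exact ⟨_, IsHomogeneous.prod _ _ _ fun p _ =>
    (isHomogeneous_X ℝ p.2).sub (isHomogeneous_X ℝ p.1)⟩

theorem eval_graphPoly_ne_zero_iff (φ : V → ℝ) :
    eval φ (graphPoly G) ≠ 0 ↔ ∀ u v, G.Adj u v → φ u ≠ φ v := by
  classical
  simp only [graphPoly, map_prod, map_sub, eval_X, ne_eq, prod_eq_zero_iff, mem_filter, mem_univ,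
    true_and, sub_eq_zero, Prod.exists, not_exists, not_and]
  refine ⟨fun h u v huv => ?_, fun h u v huv => Ne.symm (h u v huv.1)⟩
  rcases lt_or_gt_of_ne (G.ne_of_adj huv) with hlt | hgt
  · exact Ne.symm (h u v ⟨huv, hlt⟩)
  · exact h v u ⟨huv.symm, hgt⟩

end GraphPoly

theorem stmt_7 {V : Type*} [Fintype V] [LinearOrder V] (G : SimpleGraph V)
    (k : ℕ) (η : V →₀ ℕ) (hη : ∀ v, η v < k)
    (hc : MvPolynomial.coeff η (graphPoly G) ≠ 0)
    (L : V → Finset ℝ) (hL : ∀ v, (L v).card = k) :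
    ∃ φ : V → ℝ, (∀ v, φ v ∈ L v) ∧ ∀ u v, G.Adj u v → φ u ≠ φ v := by
  obtain ⟨n, hhom⟩ := graphPoly_isHomogeneous G
  obtain ⟨φ, hφL, hφ⟩ := combinatorial_nullstellensatz_exists_eval_nonzero (graphPoly G) η hc
    (hhom.totalDegree_eq_degree hc) L fun v => hL v ▸ hη v
  exact ⟨φ, hφL, (eval_graphPoly_ne_zero_iff G φ).mp hφ⟩
end

section
/- If a graph G is f-Alon–Tarsi, i.e., its graph polynomial has a non-vanishing monomial x^η with η(v) < f(v) for every vertex v, then G is f-choosable: for every list assignment L with |L(v)| = f(v) of real numbers, G has a proper L-colouring. -/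
section CN
open Finset Polynomial

lemma lagrange_power_sum {F : Type*} [Field F] [DecidableEq F]
    (S : Finset F) (d : ℕ) (hd : d < S.card) :
    ∑ s ∈ S, s ^ d * ∏ t ∈ S.erase s, (s - t)⁻¹ =
      if d = S.card - 1 then 1 else 0 := by
  have hinj : Set.InjOn (id : F → F) S := Function.injective_id.injOn
  have hdeg : ((X : F[X]) ^ d).degree < S.card := by
    rw [degree_X_pow]
    exact_mod_cast hd
  have h := Lagrange.eq_interpolate hinj hdeg
  have hb : ∀ s ∈ S, (Lagrange.basis S id s).coeff (S.card - 1)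
      = ∏ t ∈ S.erase s, (s - t)⁻¹ := by
    intro s hs
    have hbasis : Lagrange.basis S id s
        = C (∏ t ∈ S.erase s, (s - t)⁻¹) * Lagrange.nodal (S.erase s) id := by
      rw [Lagrange.basis, Lagrange.nodal, map_prod, ← prod_mul_distrib]
      exact Finset.prod_congr rfl fun t ht => rfl
    have hmonic : (Lagrange.nodal (S.erase s) id).Monic := Lagrange.nodal_monic
    have hnd : (Lagrange.nodal (S.erase s) id).natDegree = S.card - 1 := by
      rw [Lagrange.natDegree_nodal, card_erase_of_mem hs]
    rw [hbasis, coeff_C_mul, ← hnd, hmonic.coeff_natDegree, mul_one]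
  have h2 := congrArg (fun q : F[X] => q.coeff (S.card - 1)) h
  simp only [Lagrange.interpolate_apply, finset_sum_coeff, coeff_C_mul, coeff_X_pow] at h2
  rw [Finset.sum_congr rfl (fun s hs => by rw [hb s hs])] at h2
  simp only [id_eq, eval_pow, eval_X] at h2
  rw [← h2]
  simp [eq_comm]

open MvPolynomial in
/-- Interpolation formula for the top-degree coefficient on a grid. -/
lemma coeff_eq_sum_grid {F : Type*} [Field F] [DecidableEq F] {V : Type*} [Fintype V]
    [DecidableEq V]
    (S : V → Finset F) (η : V →₀ ℕ) (hS : ∀ v, (S v).card = η v + 1)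
    (p : MvPolynomial V F) (hdeg : p.totalDegree ≤ ∑ v, η v) :
    MvPolynomial.coeff η p =
      ∑ c ∈ Fintype.piFinset S, MvPolynomial.eval c p *
        ∏ v, ∏ t ∈ (S v).erase (c v), (c v - t)⁻¹ := by
  have expand : ∀ c : V → F, MvPolynomial.eval c p *
        ∏ v, ∏ t ∈ (S v).erase (c v), (c v - t)⁻¹
      = ∑ d ∈ p.support, MvPolynomial.coeff d p * (∏ v, c v ^ d v) *
          ∏ v, ∏ t ∈ (S v).erase (c v), (c v - t)⁻¹ := by
    intro c
    rw [MvPolynomial.eval_eq', Finset.sum_mul]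
  rw [Finset.sum_congr rfl fun c _ => expand c, Finset.sum_comm]
  have key : ∀ d ∈ p.support,
      (∑ c ∈ Fintype.piFinset S,
        MvPolynomial.coeff d p * (∏ v, c v ^ d v) *
          ∏ v, ∏ t ∈ (S v).erase (c v), (c v - t)⁻¹)
      = if d = η then MvPolynomial.coeff d p else 0 := by
    intro d hd
    have hrw : ∀ c : V → F,
        MvPolynomial.coeff d p * (∏ v, c v ^ d v) *
          ∏ v, ∏ t ∈ (S v).erase (c v), (c v - t)⁻¹
        = MvPolynomial.coeff d p *
            ∏ v, (c v ^ d v * ∏ t ∈ (S v).erase (c v), (c v - t)⁻¹) := by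
      intro c
      rw [mul_assoc, ← Finset.prod_mul_distrib]
    simp only [hrw]
    rw [← Finset.mul_sum, ← Finset.prod_univ_sum S (fun v s => s ^ d v * ∏ t ∈ (S v).erase s, (s - t)⁻¹)]
    by_cases hdη : d = η
    · subst hdη
      simp only [if_pos rfl]
      have : ∀ v : V, (∑ s ∈ S v, s ^ d v * ∏ t ∈ (S v).erase s, (s - t)⁻¹) = 1 := by
        intro v
        rw [lagrange_power_sum (S v) (d v) (by rw [hS v]; omega)]
        rw [hS v]
        simp
      rw [Finset.prod_congr rfl fun v _ => this v]
      simp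
    · rw [if_neg hdη]
      -- find a coordinate where d u < η u
      have hsum : ∑ v, d v ≤ ∑ v, η v := by
        refine le_trans ?_ hdeg
        have := MvPolynomial.le_totalDegree hd
        rw [Finsupp.sum_fintype _ _ (fun _ => rfl)] at this
        exact this
      have hex : ∃ u, d u < η u := by
        by_contra hcon
        push_neg at hcon
        have : ∀ v, d v = η v := by
          intro v
          by_contra hne
          have h1 : η v < d v := lt_of_le_of_ne (hcon v) (Ne.symm hne)
          have : ∑ v, η v < ∑ v, d v :=
            Finset.sum_lt_sum (fun i _ => hcon i) ⟨v, Finset.mem_univ v, h1⟩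
          omega
        exact hdη (Finsupp.ext this)
      obtain ⟨u, hu⟩ := hex
      have hfac : (∑ s ∈ S u, s ^ d u * ∏ t ∈ (S u).erase s, (s - t)⁻¹) = 0 := by
        rw [lagrange_power_sum (S u) (d u) (by rw [hS u]; omega)]
        rw [hS u]
        simp
        omega
      rw [Finset.prod_eq_zero (Finset.mem_univ u) hfac, mul_zero]
  rw [Finset.sum_congr rfl key, Finset.sum_ite_eq' p.support η (fun d => MvPolynomial.coeff d p)]
  by_cases hη : η ∈ p.support
  · rw [if_pos hη]
  · rw [if_neg hη]
    simpa using MvPolynomial.notMem_support_iff.mp hη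

end CN



open MvPolynomial Finset


/- If `G` is `f`-Alon–Tarsi then `G` is `f`-choosable. -/
theorem stmt_18 {V : Type*} [Fintype V] [LinearOrder V] (G : SimpleGraph V)
    (f : V → ℕ) (η : V →₀ ℕ) (hη : ∀ v, η v < f v)
    (hc : MvPolynomial.coeff η (graphPoly G) ≠ 0)
    (L : V → Finset ℝ) (hL : ∀ v, (L v).card = f v) :
    ∃ φ : V → ℝ, (∀ v, φ v ∈ L v) ∧ ∀ u v, G.Adj u v → φ u ≠ φ v := by
  classical
  set E : Finset (V × V) :=
    Finset.univ.filter (fun p : V × V => G.Adj p.1 p.2 ∧ p.1 < p.2) with hE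
  have hhom : (graphPoly G).IsHomogeneous E.card := by
    rw [graphPoly]
    have := MvPolynomial.IsHomogeneous.prod E
      (fun p : V × V => (MvPolynomial.X p.2 - MvPolynomial.X p.1 : MvPolynomial V ℝ))
      (fun _ => 1)
      (fun p _ => (MvPolynomial.isHomogeneous_X _ _).sub (MvPolynomial.isHomogeneous_X _ _))
    simpa using this
  have hp0 : graphPoly G ≠ 0 := fun h => hc (by simp [h])
  have hsum : ∑ v, η v = E.card := by
    have hw := hhom hc
    rw [← hw]
    rw [Finsupp.weight_apply, Finsupp.sum_fintype _ _ (by simp)]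
    simp
  have hdeg : (graphPoly G).totalDegree ≤ ∑ v, η v := by
    rw [hsum]
    exact (hhom.totalDegree hp0).le
  choose T hT1 hT2 using fun v =>
    Finset.exists_subset_card_eq (s := L v) (n := η v + 1) (by rw [hL v]; exact hη v)
  have hgrid := coeff_eq_sum_grid T η hT2 (graphPoly G) hdeg
  rw [hgrid] at hc
  obtain ⟨c, hcmem, hcne⟩ := Finset.exists_ne_zero_of_sum_ne_zero hc
  have hev : MvPolynomial.eval c (graphPoly G) ≠ 0 := left_ne_zero_of_mul hcne
  refine ⟨c, fun v => hT1 v (Fintype.mem_piFinset.mp hcmem v), ?_⟩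
  have hfac : ∀ p ∈ E, c p.2 - c p.1 ≠ 0 := by
    intro p hp h0
    apply hev
    rw [graphPoly, ← hE, map_prod]
    refine Finset.prod_eq_zero hp ?_
    simp [h0]
  intro u v huv h
  rcases lt_trichotomy u v with h1 | h1 | h1
  · exact hfac (u, v) (by simp [hE, huv, h1]) (by simp [h])
  · exact G.ne_of_adj huv h1
  · exact hfac (v, u) (by simp [hE, huv.symm, h1]) (by simp [h])
end

section
/- If x^η is a nice monomial for (G, e, M) in the sense that its coefficient in P_{G−e−M} is nonzero, η(v₁)=η(v₂)=0 for the endpoints v₁, v₂ of e, and η(v) ≤ 3 for all vertices, then the monomial x^{η''} with η''(v₁) = 1 and η'' = η elsewhere has nonzero coefficient in P_{G−M}, and hence AT(G − M) ≤ 4. -/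
open MvPolynomial Finset

/-! Deleting the edge `v₁v₂` from `G - M` divides its graph polynomial by `±(x_{v₁} - x_{v₂})`.
Since `η v₂ = 0`, only the `x_{v₁}` term of that factor reaches the monomial `x^η x_{v₁}`, so its
coefficient in `P_{G-M}` is `±` the coefficient of `x^η` in `P_{G-M-v₁v₂}`. -/

namespace SimpleGraph

variable {V : Type*} [Fintype V] [LinearOrder V]

theorem graphPoly_eq_mul_graphPoly_deleteEdges {H : SimpleGraph V} {u v : V} (huv : u < v)
    (h : H.Adj u v) :
    graphPoly H = (X v - X u) * graphPoly (H.deleteEdges {s(u, v)}) := by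
  classical
  unfold graphPoly
  rw [← Finset.mul_prod_erase _ _ (a := (u, v)) (by simp [h, huv])]
  refine congrArg _ (Finset.prod_congr ?_ fun _ _ => rfl)
  ext ⟨x, y⟩
  simp only [Finset.mem_erase, Finset.mem_filter, Finset.mem_univ, true_and, ne_eq,
    Prod.mk.injEq, deleteEdges_adj, Set.mem_singleton_iff, Sym2.eq_iff]
  constructor
  · rintro ⟨hne, hxy, hlt⟩
    refine ⟨⟨hxy, ?_⟩, hlt⟩
    rintro (huv' | ⟨rfl, rfl⟩)
    · exact hne huv'
    · exact lt_asymm hlt huv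
  · rintro ⟨⟨hxy, hne⟩, hlt⟩
    exact ⟨fun h' => hne (Or.inl h'), hxy, hlt⟩

theorem coeff_add_single_graphPoly {H : SimpleGraph V} {u v : V} (h : H.Adj u v)
    {η : V →₀ ℕ} (hv : η v = 0) :
    coeff (η + Finsupp.single u 1) (graphPoly H) = coeff η (graphPoly (H.deleteEdges {s(u, v)})) ∨
      coeff (η + Finsupp.single u 1) (graphPoly H) =
        -coeff η (graphPoly (H.deleteEdges {s(u, v)})) := by
  have hvη : v ∉ (η + Finsupp.single u 1).support := by
    simp [hv, Finsupp.single_eq_of_ne h.ne.symm]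
  have hcoeff : coeff (η + Finsupp.single u 1) ((X u - X v) * graphPoly (H.deleteEdges {s(u, v)}))
      = coeff η (graphPoly (H.deleteEdges {s(u, v)})) := by
    rw [sub_mul, coeff_sub, add_comm, coeff_X_mul, add_comm, coeff_X_mul', if_neg hvη, sub_zero]
  rcases h.ne.lt_or_gt with huv | hvu
  · right
    rw [graphPoly_eq_mul_graphPoly_deleteEdges huv h, ← neg_sub, neg_mul, coeff_neg, hcoeff]
  · left
    rw [graphPoly_eq_mul_graphPoly_deleteEdges hvu h.symm, Sym2.eq_swap, hcoeff]

end SimpleGraph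

theorem stmt_19_general {V : Type*} [Fintype V] [LinearOrder V] (G : SimpleGraph V)
    (v₁ v₂ : V) (he : G.Adj v₁ v₂)
    (M : G.Subgraph)
    (hv₁ : v₁ ∉ M.verts)
    (η : V →₀ ℕ)
    (hc : MvPolynomial.coeff η
      (graphPoly ((G.deleteEdges M.edgeSet).deleteEdges {s(v₁, v₂)})) ≠ 0)
    (h1 : η v₁ = 0) (h2 : η v₂ = 0) (h3 : ∀ v, η v ≤ 3) :
    MvPolynomial.coeff (η + Finsupp.single v₁ 1)
        (graphPoly (G.deleteEdges M.edgeSet)) ≠ 0 ∧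
      ∀ v, ((η + Finsupp.single v₁ 1 : V →₀ ℕ)) v < 4 := by
  have hadj : (G.deleteEdges M.edgeSet).Adj v₁ v₂ :=
    SimpleGraph.deleteEdges_adj.2 ⟨he, fun hM => hv₁ (M.edge_vert hM)⟩
  refine ⟨?_, fun v => ?_⟩
  · rcases SimpleGraph.coeff_add_single_graphPoly hadj h2 with hcoeff | hcoeff <;>
      simpa [hcoeff] using hc
  · rcases eq_or_ne v v₁ with rfl | hv
    · simp [h1]
    · simpa [Finsupp.single_eq_of_ne hv] using (h3 v).trans_lt (by norm_num)

theorem stmt_19 {V : Type*} [Fintype V] [LinearOrder V] (G : SimpleGraph V)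
    (v₁ v₂ : V) (he : G.Adj v₁ v₂)
    (M : G.Subgraph) (hM : M.IsMatching)
    (hv₁ : v₁ ∉ M.verts) (hv₂ : v₂ ∉ M.verts)
    (η : V →₀ ℕ)
    (hc : MvPolynomial.coeff η
      (graphPoly ((G.deleteEdges M.edgeSet).deleteEdges {s(v₁, v₂)})) ≠ 0)
    (h1 : η v₁ = 0) (h2 : η v₂ = 0) (h3 : ∀ v, η v ≤ 3) :
    MvPolynomial.coeff (η + Finsupp.single v₁ 1)
        (graphPoly (G.deleteEdges M.edgeSet)) ≠ 0 ∧
      ∀ v, ((η + Finsupp.single v₁ 1 : V →₀ ℕ)) v < 4 :=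
  stmt_19_general G v₁ v₂ he M hv₁ η hc h1 h2 h3
end
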